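/- Let σ be a measure on the real line with finite moments of all orders and infinite support, and let (P_n)_{n≥0} denote the orthonormal polynomials with respect to σ. Fix an integer M ≥ 0 and s ∈ ℝ, set P̂_{M+1} := P_{M+1} + s·P_M, and let λ_1 < λ_2 < … < λ_{M+1} be the zeros of P̂_{M+1} (they are real and simple). Then for every real polynomial Rp of degree at most 2M: ∫_ℝ Rp(λ) σ(dλ) = Σ_{k=1}^{M+1} Rp(λ_k) / ( Σ_{n=0}^{M} P_n(λ_k)² ). -/

import Mathlib

/-! The integral is a linear functional `φ` on polynomials with `φ (P_j * P_k) = δ_jk`.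
Since `P̂ = P_{M+1} + s P_M` is orthogonal to every polynomial of degree `< M`, the remainder of
`Rp` modulo `P̂` has degree `≤ M`, the same values at the zeros `λ_k`, and the same integral, so
`Rp` is integrated exactly by Lagrange interpolation at the `λ_k`, with weights `w_k = φ (L_k)`.
Applying this rule to `K(λ_k, ·) * L_k`, where `K(x, y) = ∑_{n ≤ M} P_n(x) P_n(y)` reproduces
polynomials of degree `≤ M` under `φ`, gives `K(λ_k, λ_k) * w_k = L_k(λ_k) = 1`. -/

open MeasureTheory Filter

noncomputable section

section GaussianQuadrature

open Polynomial Finset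

namespace Polynomial

variable {K : Type*} [Field K]

theorem degreeLT_le_of_natDegree_eq {P : ℕ → K[X]} (hdeg : ∀ k, (P k).natDegree = k)
    (hP : ∀ k, P k ≠ 0) {p : Submodule K K[X]} {n : ℕ} (h : ∀ k < n, P k ∈ p) :
    degreeLT K n ≤ p := by
  let S : Sequence K := ⟨P, fun k => (degree_eq_iff_natDegree_eq (hP k)).2 (hdeg k)⟩
  rw [← S.span_degreeLT fun k _ => (leadingCoeff_ne_zero.2 (hP k)).isUnit, Submodule.span_le]
  rintro _ ⟨k, hk, rfl⟩
  exact h k hk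

def reproducingKernel (P : ℕ → K[X]) (n : ℕ) (x : K) : K[X] :=
  ∑ k ∈ range (n + 1), C ((P k).eval x) * P k

theorem eval_reproducingKernel_self (P : ℕ → K[X]) (n : ℕ) (x : K) :
    (reproducingKernel P n x).eval x = ∑ k ∈ range (n + 1), (P k).eval x ^ 2 := by
  simp [reproducingKernel, eval_finsetSum, sq]

theorem natDegree_reproducingKernel_le {P : ℕ → K[X]} (hdeg : ∀ k, (P k).natDegree = k)
    (n : ℕ) (x : K) : (reproducingKernel P n x).natDegree ≤ n :=
  natDegree_sum_le_of_forall_le _ _ fun k hk =>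
    (natDegree_C_mul_le _ _).trans ((hdeg k).trans_le (Nat.lt_succ_iff.1 (mem_range.1 hk)))

theorem natDegree_add_C_mul {P : ℕ → K[X]} (hdeg : ∀ k, (P k).natDegree = k) (n : ℕ)
    (t : K) : (P (n + 1) + C t * P n).natDegree = n + 1 := by
  rw [natDegree_add_eq_left_of_natDegree_lt, hdeg]
  exact (natDegree_C_mul_le t _).trans_lt (by rw [hdeg, hdeg]; omega)

section Orthonormal

variable (φ : K[X] →ₗ[K] K) {P : ℕ → K[X]}

theorem ne_zero_of_orthonormal (horth : ∀ k m, φ (P k * P m) = if k = m then 1 else 0)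
    (k : ℕ) : P k ≠ 0 := by
  intro h
  simpa [h] using horth k k

theorem map_mul_eq_zero_of_degree_lt (hdeg : ∀ k, (P k).natDegree = k)
    (horth : ∀ k m, φ (P k * P m) = if k = m then 1 else 0) {n : ℕ} {q : K[X]}
    (hq : q.degree < n) : φ (q * P n) = 0 := by
  have : degreeLT K n ≤ LinearMap.ker (φ ∘ₗ LinearMap.mulRight K (P n)) :=
    degreeLT_le_of_natDegree_eq hdeg (ne_zero_of_orthonormal φ horth) fun k hk => by
      simp [horth, hk.ne]
  exact this (mem_degreeLT.2 hq)

theorem map_reproducingKernel_mul (hdeg : ∀ k, (P k).natDegree = k)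
    (horth : ∀ k m, φ (P k * P m) = if k = m then 1 else 0) {n : ℕ} (x : K) {q : K[X]}
    (hq : q.natDegree ≤ n) : φ (reproducingKernel P n x * q) = q.eval x := by
  have : degreeLT K (n + 1) ≤
      LinearMap.ker (φ ∘ₗ LinearMap.mulLeft K (reproducingKernel P n x) - leval x) :=
    degreeLT_le_of_natDegree_eq hdeg (ne_zero_of_orthonormal φ horth) fun k hk => by
      simp [reproducingKernel, sum_mul, ← smul_eq_C_mul, horth, mem_range.2 hk]
  have hq' : q.degree < ↑(n + 1) :=
    degree_le_natDegree.trans_lt (by exact_mod_cast Nat.lt_succ_of_le hq)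
  simpa [sub_eq_zero] using this (mem_degreeLT.2 hq')

theorem map_mul_add_C_mul_eq_zero (hdeg : ∀ k, (P k).natDegree = k)
    (horth : ∀ k m, φ (P k * P m) = if k = m then 1 else 0) {n : ℕ} (t : K) {q : K[X]}
    (hq : q.degree < n) : φ (q * (P (n + 1) + C t * P n)) = 0 := by
  have hq' : q.degree < ↑(n + 1) := hq.trans (by exact_mod_cast n.lt_succ_self)
  rw [mul_add, map_add, mul_left_comm, ← smul_eq_C_mul, map_smul,
    map_mul_eq_zero_of_degree_lt φ hdeg horth hq', map_mul_eq_zero_of_degree_lt φ hdeg horth hq,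
    smul_zero, add_zero]

end Orthonormal

section Quadrature

variable (φ : K[X] →ₗ[K] K) {ι : Type*} [DecidableEq ι] {s : Finset ι} {v : ι → K}

theorem map_eq_sum_eval_mul_map_basis_of_degree_lt (hv : Set.InjOn v s) {r : K[X]}
    (hr : r.degree < #s) :
    φ r = ∑ i ∈ s, r.eval (v i) * φ (Lagrange.basis s v i) := by
  conv_lhs => rw [Lagrange.eq_interpolate hv hr, Lagrange.interpolate_apply]
  simp only [map_sum, ← smul_eq_C_mul, map_smul, smul_eq_mul]

theorem map_eq_sum_eval_mul_map_basis_of_natDegree_le_two_mul {M : ℕ} (hv : Set.InjOn v s)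
    (hs : #s = M + 1) {Φ : K[X]} (hΦdeg : Φ.natDegree = M + 1)
    (hΦ : ∀ i ∈ s, Φ.eval (v i) = 0)
    (hΦorth : ∀ q : K[X], q.degree < M → φ (q * Φ) = 0) {Q : K[X]}
    (hQ : Q.natDegree ≤ 2 * M) :
    φ Q = ∑ i ∈ s, Q.eval (v i) * φ (Lagrange.basis s v i) := by
  have hΦ0 : Φ ≠ 0 := ne_zero_of_natDegree_gt (n := 0) (by omega)
  have hdiv : (Q / Φ).degree < M := by
    by_cases h0 : Q / Φ = 0
    · simp [h0]
    have hQ0 : Q ≠ 0 := by rintro rfl; simp at h0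
    have := degree_add_div hΦ0 (not_lt.1 (mt (Polynomial.div_eq_zero_iff hΦ0).2 h0))
    rw [degree_eq_natDegree h0, degree_eq_natDegree hΦ0, degree_eq_natDegree hQ0] at this
    rw [degree_eq_natDegree h0]
    norm_cast at this ⊢
    omega
  have hmod : (Q % Φ).degree < #s := by
    rw [hs, ← hΦdeg, ← degree_eq_natDegree hΦ0]
    exact degree_mod_lt Q hΦ0
  calc φ Q = φ (Q / Φ * Φ) + φ (Q % Φ) := by
        rw [← map_add, mul_comm, EuclideanDomain.div_add_mod]
    _ = ∑ i ∈ s, (Q % Φ).eval (v i) * φ (Lagrange.basis s v i) := by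
        rw [hΦorth _ hdiv, zero_add, map_eq_sum_eval_mul_map_basis_of_degree_lt φ hv hmod]
    _ = ∑ i ∈ s, Q.eval (v i) * φ (Lagrange.basis s v i) := by
        refine sum_congr rfl fun i hi => ?_
        conv_rhs => rw [← EuclideanDomain.div_add_mod Q Φ]
        simp [hΦ i hi]

theorem eval_reproducingKernel_self_mul_map_basis {P : ℕ → K[X]}
    (hdeg : ∀ k, (P k).natDegree = k) (horth : ∀ k m, φ (P k * P m) = if k = m then 1 else 0)
    {M : ℕ} (hv : Set.InjOn v s) (hs : #s = M + 1)
    (hquad : ∀ Q : K[X], Q.natDegree ≤ 2 * M →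
      φ Q = ∑ i ∈ s, Q.eval (v i) * φ (Lagrange.basis s v i))
    {i : ι} (hi : i ∈ s) :
    (reproducingKernel P M (v i)).eval (v i) * φ (Lagrange.basis s v i) = 1 := by
  set L := Lagrange.basis s v i
  set Kx := reproducingKernel P M (v i)
  have hL : L.natDegree = M := by simp [L, Lagrange.natDegree_basis hv hi, hs]
  have hKx : Kx.natDegree ≤ M := natDegree_reproducingKernel_le hdeg M (v i)
  have hKL : (Kx * L).natDegree ≤ 2 * M := natDegree_mul_le.trans (by omega)
  calc Kx.eval (v i) * φ L = ∑ j ∈ s, (Kx * L).eval (v j) * φ (Lagrange.basis s v j) := by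
        rw [sum_eq_single_of_mem i hi fun j hj hji => by
          simp [L, Lagrange.eval_basis_of_ne hji.symm hj]]
        simp [L, Lagrange.eval_basis_self hv hi]
    _ = φ (Kx * L) := (hquad _ hKL).symm
    _ = L.eval (v i) := map_reproducingKernel_mul φ hdeg horth _ hL.le
    _ = 1 := Lagrange.eval_basis_self hv hi

end Quadrature

end Polynomial

theorem integrable_eval_of_moments {σ : Measure ℝ}
    (hmom : ∀ k : ℕ, Integrable (fun x : ℝ => x ^ k) σ) (p : ℝ[X]) :
    Integrable (fun x => p.eval x) σ := by
  simp_rw [eval_eq_sum_range]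
  exact integrable_finsetSum _ fun k _ => (hmom k).const_mul _

def momentFunctional (σ : Measure ℝ) (hmom : ∀ k : ℕ, Integrable (fun x : ℝ => x ^ k) σ) :
    ℝ[X] →ₗ[ℝ] ℝ where
  toFun p := ∫ x, p.eval x ∂σ
  map_add' p q := by
    simpa only [eval_add] using
      integral_add (integrable_eval_of_moments hmom p) (integrable_eval_of_moments hmom q)
  map_smul' c p := by simp [integral_const_mul]

end GaussianQuadrature

theorem stmt9 (σ : Measure ℝ)
    (hmom : ∀ k : ℕ, Integrable (fun l : ℝ => l ^ k) σ)
    (P : ℕ → Polynomial ℝ) (hPdeg : ∀ k, (P k).natDegree = k)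
    (hPorth : ∀ k m, (∫ l, (P k).eval l * (P m).eval l ∂σ) = if k = m then 1 else 0)
    (M : ℕ) (s : ℝ) (lam : Fin (M + 1) → ℝ) (hlam : StrictMono lam)
    (hroots : ∀ j, (P (M + 1) + Polynomial.C s * P M).eval (lam j) = 0)
    (Rp : Polynomial ℝ) (hRp : Rp.natDegree ≤ 2 * M) :
    ∫ l, Rp.eval l ∂σ =
      ∑ j, Rp.eval (lam j) / ∑ k ∈ Finset.range (M + 1), (P k).eval (lam j) ^ 2 := by
  set φ := momentFunctional σ hmom
  have horth : ∀ k m, φ (P k * P m) = if k = m then 1 else 0 := by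
    simpa [φ, momentFunctional, Polynomial.eval_mul] using hPorth
  have hv : Set.InjOn lam (Finset.univ : Finset (Fin (M + 1))) := hlam.injective.injOn
  have hquad : ∀ Q : Polynomial ℝ, Q.natDegree ≤ 2 * M →
      φ Q = ∑ j, Q.eval (lam j) * φ (Lagrange.basis Finset.univ lam j) := fun Q hQ =>
    Polynomial.map_eq_sum_eval_mul_map_basis_of_natDegree_le_two_mul φ hv (Finset.card_fin _)
      (Polynomial.natDegree_add_C_mul hPdeg M s) (fun j _ => hroots j)
      (fun _ hq => Polynomial.map_mul_add_C_mul_eq_zero φ hPdeg horth s hq) hQ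
  refine (hquad Rp hRp).trans (Finset.sum_congr rfl fun j _ => ?_)
  rw [eq_inv_of_mul_eq_one_right (Polynomial.eval_reproducingKernel_self_mul_map_basis φ hPdeg
    horth hv (Finset.card_fin _) hquad (Finset.mem_univ j)),
    Polynomial.eval_reproducingKernel_self, div_eq_mul_inv]

end
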